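/- arXiv:1403.6764 — 4 statements merged into one kernel-verified Lean document; each statement's English description precedes it below -/
import Mathlib

section
/- For every matrix A ∈ ℝ^{n×n} and every positive integer m, there exists a matrix B ∈ ℝ^{n_m×n_m} (denoted A_[m]) such that (exp(tA))^[m] = exp(tB) for every t ≥ 0. -/
open scoped BigOperators

noncomputable section

/-- The multi-indices `α : Fin n → ℕ` with `∑ α i = m` form a finite type. -/
instance multiIdxFintype (n m : ℕ) : Fintype {α : Fin n → ℕ // ∑ i, α i = m} :=
  Fintype.subtype (Finset.Nat.antidiagonalTuple n m) fun _ =>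
    Finset.Nat.mem_antidiagonalTuple

/-- The `m`-lift `x^[m]` of a vector `x ∈ ℝⁿ`: the entry indexed by the multi-index `α`
is `√(m!/(α₁!⋯αₙ!)) · x₁^{α₁} ⋯ xₙ^{αₙ}`. -/
def mLift (n m : ℕ) (x : Fin n → ℝ) : {α : Fin n → ℕ // ∑ i, α i = m} → ℝ :=
  fun α => Real.sqrt (Nat.multinomial Finset.univ α.1) * ∏ i, x i ^ α.1 i

/-- `L` is the `m`-lift `A^[m]` of the matrix `A`, i.e. `(Ax)^[m] = L x^[m]` for all `x`. -/
def IsMatrixLift (n m : ℕ) (A : Matrix (Fin n) (Fin n) ℝ)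
    (L : Matrix {α : Fin n → ℕ // ∑ i, α i = m} {α : Fin n → ℕ // ∑ i, α i = m} ℝ) : Prop :=
  ∀ x : Fin n → ℝ, mLift n m (A.mulVec x) = L.mulVec (mLift n m x)

/-- The Euclidean norm of a vector in `ℝⁿ`. -/
def euclNorm {n : ℕ} (x : Fin n → ℝ) : ℝ := Real.sqrt (∑ i, x i ^ 2)

/-- The spectral radius of a real square matrix: the supremum of the absolute values of its
complex eigenvalues. -/
def specRad {N : Type*} [Fintype N] [DecidableEq N] (M : Matrix N N ℝ) : ENNReal :=
  spectralRadius ℂ (M.map (algebraMap ℝ ℂ))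

end

/-!
Along a trajectory `y' = A y`, the monomial `y^α` of degree `m` has derivative
`∑ᵢ αᵢ y^(α - eᵢ) (A y)ᵢ = ∑ᵢₖ αᵢ Aᵢₖ y^(α - eᵢ + eₖ)`, again a combination of monomials of
degree `m`. Hence `t ↦ (exp (t A) x)^[m]` solves a linear ODE `z' = A_[m] z` with
`z 0 = x^[m]`, and uniqueness of solutions gives `(exp (t A) x)^[m] = exp (t A_[m]) x^[m]`.
-/

open Finset NormedSpace
open scoped Matrix

section Monomial

variable {ι : Type*} [Fintype ι] [DecidableEq ι]

theorem sum_sub_single_add_single {a : ι → ℕ} {i : ι} (hi : 1 ≤ a i) (k : ι) :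
    ∑ j, (a - Pi.single i 1 + Pi.single k 1 : ι → ℕ) j = ∑ j, a j := by
  have ha : a - Pi.single i 1 + Pi.single i 1 = a := by
    refine tsub_add_cancel_of_le fun j => ?_
    by_cases h : j = i
    · subst h; simpa using hi
    · simp [h]
  conv_rhs => rw [← ha]
  simp only [Pi.add_apply, sum_add_distrib, Fintype.sum_pi_single']

theorem prod_pow_sub_single {R : Type*} [CommMonoid R] (x : ι → R) (a : ι → ℕ) (i : ι) :
    ∏ j, x j ^ (a - Pi.single i 1 : ι → ℕ) j =
      x i ^ (a i - 1) * ∏ j ∈ univ.erase i, x j ^ a j := by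
  rw [← mul_prod_erase _ _ (mem_univ i)]
  congr 1
  · simp
  · exact prod_congr rfl fun j hj => by simp [ne_of_mem_erase hj]

theorem prod_pow_add_single {R : Type*} [CommMonoid R] (x : ι → R) (a : ι → ℕ) (k : ι) :
    ∏ j, x j ^ (a + Pi.single k 1 : ι → ℕ) j = x k * ∏ j, x j ^ a j := by
  simp only [Pi.add_apply, pow_add, prod_mul_distrib, Pi.single_apply, pow_ite, pow_one,
    pow_zero, Fintype.prod_ite_eq']
  exact mul_comm _ _

theorem HasDerivAt.prod_pow {𝕜 : Type*} [NontriviallyNormedField 𝕜] {y : 𝕜 → ι → 𝕜}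
    {y' : ι → 𝕜} {u : 𝕜} (hy : HasDerivAt y y' u) (a : ι → ℕ) :
    HasDerivAt (fun u => ∏ j, y u j ^ a j)
      (∑ i, a i * (∏ j, y u j ^ (a - Pi.single i 1 : ι → ℕ) j) * y' i) u := by
  refine (HasDerivAt.fun_finsetProd fun i _ => (hasDerivAt_pi.1 hy i).fun_pow (a i)).congr_deriv
    (sum_congr rfl fun i _ => ?_)
  rw [prod_pow_sub_single, smul_eq_mul]
  ring

end Monomial

section MatrixExp

variable {ι : Type*} [Fintype ι] [DecidableEq ι]

theorem hasDerivAt_exp_smul_mulVec (M : Matrix ι ι ℝ) (x : ι → ℝ) (t : ℝ) :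
    HasDerivAt (fun u : ℝ => exp (u • M) *ᵥ x) (M *ᵥ (exp (t • M) *ᵥ x)) t := by
  let : NormedRing (Matrix ι ι ℝ) := Matrix.linftyOpNormedRing
  let : NormedAlgebra ℝ (Matrix ι ι ℝ) := Matrix.linftyOpNormedAlgebra
  let applyAt : Matrix ι ι ℝ →L[ℝ] ι → ℝ :=
    (LinearMap.applyₗ x ∘ₗ Matrix.toLin'.toLinearMap).toContinuousLinearMap
  exact (applyAt.hasFDerivAt.comp_hasDerivAt t (hasDerivAt_exp_smul_const' M t)).congr_deriv
    (Matrix.mulVec_mulVec _ _ _).symm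

theorem eq_exp_smul_mulVec_of_hasDerivAt (B : Matrix ι ι ℝ) {g : ℝ → ι → ℝ}
    (hg : ∀ u, HasDerivAt g (B *ᵥ g u) u) (t : ℝ) : g t = exp (t • B) *ᵥ g 0 := by
  have hlip : LipschitzWith _ (fun y => B *ᵥ y) :=
    (Matrix.toLin' B).toContinuousLinearMap.lipschitz
  refine congrFun (ODE_solution_unique_univ (v := fun _ y => B *ᵥ y) (s := fun _ => Set.univ)
    (t₀ := 0) (fun _ => hlip.lipschitzOnWith) (fun u => ⟨hg u, trivial⟩)
    (fun u => ⟨hasDerivAt_exp_smul_mulVec B (g 0) u, trivial⟩) ?_) t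
  simp

end MatrixExp

/-- The matrix of the derivation `y^α ↦ ∑ᵢₖ αᵢ Aᵢₖ y^(α - eᵢ + eₖ)` in the basis of the
rescaled monomials `√(m!/α!) y^α` (the paper's `A_[m]`). -/
noncomputable def liftGenerator (n m : ℕ) (A : Matrix (Fin n) (Fin n) ℝ) :
    Matrix {α : Fin n → ℕ // ∑ i, α i = m} {α : Fin n → ℕ // ∑ i, α i = m} ℝ :=
  fun α β => ∑ i, ∑ k,
    if β.1 = α.1 - Pi.single i 1 + Pi.single k 1 then
      α.1 i * A i k * √(Nat.multinomial univ α.1) / √(Nat.multinomial univ β.1)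
    else 0

section Lift

variable {n m : ℕ}

theorem liftGenerator_mulVec_mLift (A : Matrix (Fin n) (Fin n) ℝ) (y : Fin n → ℝ)
    (α : {α : Fin n → ℕ // ∑ i, α i = m}) :
    (liftGenerator n m A *ᵥ mLift n m y) α = √(Nat.multinomial univ α.1) *
      ∑ i, α.1 i * (∏ j, y j ^ (α.1 - Pi.single i 1 : Fin n → ℕ) j) * (A *ᵥ y) i := by
  have entry : ∀ i k, ∑ β : {α : Fin n → ℕ // ∑ i, α i = m},
      (if β.1 = α.1 - Pi.single i 1 + Pi.single k 1 then
        α.1 i * A i k * √(Nat.multinomial univ α.1) / √(Nat.multinomial univ β.1)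
      else 0) * mLift n m y β =
      α.1 i * A i k * √(Nat.multinomial univ α.1) *
        (y k * ∏ j, y j ^ (α.1 - Pi.single i 1 : Fin n → ℕ) j) := by
    intro i k
    rcases Nat.eq_zero_or_pos (α.1 i) with h0 | hi
    · simp only [h0, Nat.cast_zero, zero_mul, zero_div, ite_self, sum_const_zero]
    let β₀ : {α : Fin n → ℕ // ∑ i, α i = m} :=
      ⟨α.1 - Pi.single i 1 + Pi.single k 1, (sum_sub_single_add_single hi k).trans α.2⟩
    have hβ : ∀ β : {α : Fin n → ℕ // ∑ i, α i = m},
        β.1 = α.1 - Pi.single i 1 + Pi.single k 1 ↔ β = β₀ :=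
      fun _ => (Subtype.ext_iff (a2 := β₀)).symm
    have hβ₀ : √(Nat.multinomial univ (α.1 - Pi.single i 1 + Pi.single k 1) : ℝ) ≠ 0 :=
      (Real.sqrt_pos.2 (by exact_mod_cast Nat.multinomial_pos _ _)).ne'
    simp only [hβ, ite_mul, zero_mul, Fintype.sum_ite_eq']
    simp only [β₀, mLift, prod_pow_add_single]
    field_simp
  simp only [Matrix.mulVec, dotProduct, liftGenerator, sum_mul]
  rw [sum_comm, mul_sum]
  refine sum_congr rfl fun i _ => ?_
  rw [sum_comm, mul_sum, mul_sum]
  refine sum_congr rfl fun k _ => ?_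
  rw [entry]
  ring

theorem hasDerivAt_mLift (A : Matrix (Fin n) (Fin n) ℝ) {y : ℝ → Fin n → ℝ} {u : ℝ}
    (hy : HasDerivAt y (A *ᵥ y u) u) :
    HasDerivAt (fun u => mLift n m (y u)) (liftGenerator n m A *ᵥ mLift n m (y u)) u := by
  refine hasDerivAt_pi.2 fun α => ?_
  rw [liftGenerator_mulVec_mLift]
  exact (hy.prod_pow α.1).const_mul _

end Lift

theorem exists_matrixLift_exp_general (n m : ℕ) (A : Matrix (Fin n) (Fin n) ℝ) :
    ∃ B : Matrix {α : Fin n → ℕ // ∑ i, α i = m} {α : Fin n → ℕ // ∑ i, α i = m} ℝ,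
      ∀ t : ℝ, 0 ≤ t →
        IsMatrixLift n m (NormedSpace.exp (t • A)) (NormedSpace.exp (t • B)) := by
  refine ⟨liftGenerator n m A, fun t _ x => ?_⟩
  simpa using eq_exp_smul_mulVec_of_hasDerivAt (liftGenerator n m A)
    (fun u => hasDerivAt_mLift A (hasDerivAt_exp_smul_mulVec A x u)) t

/-- For every `A ∈ ℝ^{n×n}` and every positive integer `m`, there exists a
matrix `B ∈ ℝ^{n_m × n_m}` (denoted `A_[m]`) such that `(exp(tA))^[m] = exp(tB)` for every
`t ≥ 0`. -/
theorem exists_matrixLift_exp (n m : ℕ) (hm : 0 < m) (A : Matrix (Fin n) (Fin n) ℝ) :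
    ∃ B : Matrix {α : Fin n → ℕ // ∑ i, α i = m} {α : Fin n → ℕ // ∑ i, α i = m} ℝ,
      ∀ t : ℝ, 0 ≤ t →
        IsMatrixLift n m (NormedSpace.exp (t • A)) (NormedSpace.exp (t • B)) :=
  exists_matrixLift_exp_general n m A
end

section
/- For every matrix A ∈ ℝ^{n×n} and every positive integer m, the spectral radius of the m-lift A^[m] equals the m-th power of the spectral radius of A: ρ(A^[m]) = ρ(A)^m. -/
open scoped BigOperators

/-! Gelfand's formula reduces the claim to comparing the growth of `A^k` and of its lift `L^k`.
The lift is norm-multiplicative, `‖x^[m]‖ = ‖x‖^m` (multinomial theorem), so on a lifted vector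
`x^[m]` the matrix `L^k` has gain `(‖A^k x‖ / ‖x‖)^m`. The lifted vectors span (distinct monomials
are linearly independent functions), and an operator bounded on a fixed spanning set is bounded up
to a constant depending on that set only. Hence, for the operator norms of the complexified
matrices, `‖A^k‖^m ≤ C ‖L^k‖` and `‖L^k‖ ≤ D ‖A^k‖^m` with `C, D` independent of `k`, and taking
`k`-th roots gives `ρ(L) = ρ(A)^m`. -/

open Filter Matrix
open scoped ENNReal NNReal Topology

theorem Submodule.span_image_eq_top_of_span_eq_top {R A V W : Type*} [CommSemiring R]
    [Semiring A] [Algebra R A] [AddCommMonoid V] [Module R V] [AddCommMonoid W] [Module R W]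
    [Module A W] [IsScalarTower R A W] (f : V →ₗ[R] W) {s : Set V}
    (hs : Submodule.span R s = ⊤) (hf : Submodule.span A (Set.range f) = ⊤) :
    Submodule.span A (f '' s) = ⊤ := by
  refine eq_top_iff.2 (hf ▸ Submodule.span_le.2 ?_)
  rintro _ ⟨v, rfl⟩
  apply Submodule.span_le_restrictScalars R A
  rw [Submodule.span_image, hs, Submodule.map_top]
  exact ⟨v, rfl⟩

theorem exists_opNNNorm_le_of_span_eq_top {𝕜 E F : Type*} [NontriviallyNormedField 𝕜]
    [CompleteSpace 𝕜] [NormedAddCommGroup E] [NormedSpace 𝕜 E] [FiniteDimensional 𝕜 E]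
    [NormedAddCommGroup F] [NormedSpace 𝕜 F] {s : Set E} (hs : Submodule.span 𝕜 s = ⊤) :
    ∃ C > (0 : ℝ≥0), ∀ (u : E →L[𝕜] F) (M : ℝ≥0), (∀ x ∈ s, ‖u x‖₊ ≤ M * ‖x‖₊) →
      ‖u‖₊ ≤ C * M := by
  let b := Module.Basis.ofSpan hs.ge
  have : Finite _ := Module.Finite.finite_basis b
  obtain ⟨C, hC, hb⟩ := b.exists_opNNNorm_le (F := F)
  obtain ⟨R, hR⟩ := (Set.finite_range fun i => ‖b i‖₊).bddAbove
  refine ⟨C * max R 1, by positivity, fun u M hu => ?_⟩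
  calc ‖u‖₊ ≤ C * (M * max R 1) := hb _ fun i =>
        (hu _ (Module.Basis.ofSpan_subset _ ⟨i, rfl⟩)).trans
          (by gcongr; exact (hR ⟨i, rfl⟩).trans (le_max_left _ _))
    _ = C * max R 1 * M := by ring

theorem linearIndependent_prod_pow {σ κ R : Type*} [Fintype σ] [Fintype κ] [CommRing R]
    [IsDomain R] [Infinite R] {e : κ → σ → ℕ} (he : Function.Injective e) :
    LinearIndependent R (fun j (x : σ → R) => ∏ i, x i ^ e j i) := by
  classical
  rw [Fintype.linearIndependent_iff]
  intro c hc j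
  set P : MvPolynomial σ R :=
    ∑ j, MvPolynomial.monomial (Finsupp.equivFunOnFinite.symm (e j)) (c j)
  have hP : P = 0 := MvPolynomial.funext fun x => by
    simpa [P, MvPolynomial.eval_monomial, Finsupp.prod_fintype] using congrFun hc x
  have := congrArg (MvPolynomial.coeff (Finsupp.equivFunOnFinite.symm (e j))) hP
  simpa [P, MvPolynomial.coeff_sum, MvPolynomial.coeff_monomial, he.eq_iff,
    Finsupp.equivFunOnFinite.symm.injective.eq_iff] using this

theorem ENNReal.tendsto_pow_rpow_one_div {u : ℕ → ℝ≥0} {a : ℝ≥0∞}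
    (hu : Tendsto (fun k : ℕ => (u k : ℝ≥0∞) ^ (1 / k : ℝ)) atTop (𝓝 a)) (m : ℕ) :
    Tendsto (fun k : ℕ => ((u k ^ m : ℝ≥0) : ℝ≥0∞) ^ (1 / k : ℝ)) atTop (𝓝 (a ^ m)) := by
  refine (ENNReal.Tendsto.pow hu).congr fun k => ?_
  rw [ENNReal.coe_pow, ← ENNReal.rpow_mul_natCast, ← ENNReal.rpow_natCast_mul, mul_comm]

theorem ENNReal.le_of_le_mul_of_tendsto_rpow_one_div {u v : ℕ → ℝ≥0} {a b : ℝ≥0∞} {c : ℝ≥0}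
    (hc : c ≠ 0) (huv : ∀ k, u k ≤ c * v k)
    (hu : Tendsto (fun k : ℕ => (u k : ℝ≥0∞) ^ (1 / k : ℝ)) atTop (𝓝 a))
    (hv : Tendsto (fun k : ℕ => (v k : ℝ≥0∞) ^ (1 / k : ℝ)) atTop (𝓝 b)) : a ≤ b := by
  have hc1 : Tendsto (fun k : ℕ => (c : ℝ≥0∞) ^ (1 / k : ℝ)) atTop (𝓝 1) := by
    have := tendsto_const_nhds.nnrpow tendsto_one_div_atTop_nhds_zero_nat (Or.inl hc)
    rw [NNReal.rpow_zero] at this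
    exact (ENNReal.tendsto_coe.2 this).congr fun k => ENNReal.coe_rpow_of_ne_zero hc _
  have hcv := ENNReal.Tendsto.mul hc1 (Or.inl one_ne_zero) hv (Or.inr ENNReal.one_ne_top)
  rw [one_mul] at hcv
  refine le_of_tendsto_of_tendsto' hu hcv fun k => ?_
  rw [← ENNReal.mul_rpow_of_nonneg _ _ (by positivity), ← ENNReal.coe_mul]
  exact ENNReal.rpow_le_rpow (ENNReal.coe_le_coe.2 (huv k)) (by positivity)

section Complexify

noncomputable def complexify (ι : Type*) : (ι → ℝ) →ₗ[ℝ] EuclideanSpace ℂ ι :=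
  (WithLp.linearEquiv 2 ℝ (ι → ℂ)).symm.toLinearMap ∘ₗ Complex.ofRealCLM.toLinearMap.compLeft ι

theorem complexify_apply {ι : Type*} (v : ι → ℝ) :
    complexify ι v = WithLp.toLp 2 fun i => (v i : ℂ) :=
  rfl

variable {ι : Type*} [Fintype ι]

theorem norm_complexify (v : ι → ℝ) : ‖complexify ι v‖ = √(∑ i, v i ^ 2) := by
  simp [complexify_apply, EuclideanSpace.norm_eq]

theorem span_range_complexify : Submodule.span ℂ (Set.range (complexify ι)) = ⊤ := by
  classical
  refine eq_top_iff.2 ((EuclideanSpace.basisFun ι ℂ).toBasis.span_eq ▸ Submodule.span_mono ?_)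
  rintro _ ⟨i, rfl⟩
  exact ⟨Pi.single i 1, by ext j; simp [complexify_apply, Pi.single_apply, apply_ite]⟩

theorem span_complexify_image_eq_top {s : Set (ι → ℝ)} (hs : Submodule.span ℝ s = ⊤) :
    Submodule.span ℂ (complexify ι '' s) = ⊤ :=
  Submodule.span_image_eq_top_of_span_eq_top _ hs span_range_complexify

theorem toEuclideanCLM_map_complexify [DecidableEq ι] (M : Matrix ι ι ℝ) (v : ι → ℝ) :
    toEuclideanCLM (𝕜 := ℂ) (M.map (algebraMap ℝ ℂ)) (complexify ι v) =
      complexify ι (M *ᵥ v) := by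
  ext i
  simp [complexify_apply, mulVec, dotProduct]

end Complexify

theorem sum_sq_mLift (n m : ℕ) (x : Fin n → ℝ) :
    ∑ α, mLift n m x α ^ 2 = (∑ i, x i ^ 2) ^ m := by
  rw [Finset.sum_pow_eq_sum_piAntidiag,
    Finset.sum_subtype _ (p := fun α : Fin n → ℕ => ∑ i, α i = m)
      (by simp [Finset.mem_piAntidiag])]
  refine Finset.sum_congr rfl fun α _ => ?_
  rw [mLift, mul_pow, Real.sq_sqrt (by positivity), ← Finset.prod_pow]
  simp only [← pow_mul, mul_comm]

theorem nnnorm_complexify_mLift (n m : ℕ) (x : Fin n → ℝ) :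
    ‖complexify _ (mLift n m x)‖₊ = ‖complexify _ x‖₊ ^ m := by
  rw [← NNReal.coe_inj, NNReal.coe_pow, coe_nnnorm, coe_nnnorm, norm_complexify, norm_complexify,
    sum_sq_mLift, Real.sqrt_eq_iff_eq_sq (by positivity) (by positivity), ← pow_mul, mul_comm,
    pow_mul, Real.sq_sqrt (by positivity)]

theorem span_range_mLift (n m : ℕ) : Submodule.span ℝ (Set.range (mLift n m)) = ⊤ := by
  by_contra hne
  obtain ⟨f, hf0, hf⟩ := Submodule.exists_le_ker_of_lt_top _ (lt_top_iff_ne_top.2 hne)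
  let e : {α : Fin n → ℕ // ∑ i, α i = m} → {α : Fin n → ℕ // ∑ i, α i = m} → ℝ :=
    fun β γ => if β = γ then 1 else 0
  have hcoeff := Fintype.linearIndependent_iff.1 (linearIndependent_prod_pow (R := ℝ)
    Subtype.val_injective) (fun β => √(Nat.multinomial Finset.univ β.1) * f (e β)) <| by
    funext x
    have hx : f (mLift n m x) = 0 := hf (Submodule.subset_span ⟨x, rfl⟩)
    rw [LinearMap.pi_apply_eq_sum_univ] at hx
    simpa [mLift, e, mul_comm, mul_left_comm, mul_assoc] using hx
  refine hf0 (LinearMap.ext fun v => ?_)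
  have hfe : ∀ β, f (e β) = 0 := fun β =>
    (mul_eq_zero.1 (hcoeff β)).resolve_left
      (Real.sqrt_ne_zero'.2 (by exact_mod_cast Nat.multinomial_pos _ _))
  simp [LinearMap.pi_apply_eq_sum_univ f v, e, hfe]

theorem IsMatrixLift.pow {n m : ℕ} {A : Matrix (Fin n) (Fin n) ℝ}
    {L : Matrix {α : Fin n → ℕ // ∑ i, α i = m} {α : Fin n → ℕ // ∑ i, α i = m} ℝ}
    (hL : IsMatrixLift n m A L) (k : ℕ) : IsMatrixLift n m (A ^ k) (L ^ k) := by
  induction k with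
  | zero => intro x; simp
  | succ k ih => intro x; rw [pow_succ, pow_succ, ← mulVec_mulVec, ← mulVec_mulVec, ih, hL]

open scoped Matrix.Norms.L2Operator

theorem tendsto_nnnorm_pow_map_rpow_one_div_specRad {ι : Type*} [Fintype ι] [DecidableEq ι]
    (M : Matrix ι ι ℝ) :
    Tendsto (fun k : ℕ => (‖(M ^ k).map (algebraMap ℝ ℂ)‖₊ : ℝ≥0∞) ^ (1 / k : ℝ)) atTop
      (𝓝 (specRad M)) := by
  simpa only [specRad, ← RingHom.mapMatrix_apply, map_pow] using
    spectrum.pow_nnnorm_pow_one_div_tendsto_nhds_spectralRadius (M.map (algebraMap ℝ ℂ))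

theorem IsMatrixLift.nnnorm_toEuclideanCLM_complexify_mLift {n m : ℕ} {A : Matrix (Fin n) (Fin n) ℝ}
    {L : Matrix {α : Fin n → ℕ // ∑ i, α i = m} {α : Fin n → ℕ // ∑ i, α i = m} ℝ}
    (hL : IsMatrixLift n m A L) (x : Fin n → ℝ) :
    ‖toEuclideanCLM (𝕜 := ℂ) (L.map (algebraMap ℝ ℂ)) (complexify _ (mLift n m x))‖₊ =
      ‖toEuclideanCLM (𝕜 := ℂ) (A.map (algebraMap ℝ ℂ)) (complexify _ x)‖₊ ^ m := by
  rw [toEuclideanCLM_map_complexify, toEuclideanCLM_map_complexify, ← hL,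
    nnnorm_complexify_mLift]

theorem exists_nnnorm_map_le_mul_nnnorm_map_pow (n m : ℕ) :
    ∃ D > (0 : ℝ≥0), ∀ (A : Matrix (Fin n) (Fin n) ℝ)
      (L : Matrix {α : Fin n → ℕ // ∑ i, α i = m} {α : Fin n → ℕ // ∑ i, α i = m} ℝ),
      IsMatrixLift n m A L →
        ‖L.map (algebraMap ℝ ℂ)‖₊ ≤ D * ‖A.map (algebraMap ℝ ℂ)‖₊ ^ m := by
  obtain ⟨D, hD, hbound⟩ := exists_opNNNorm_le_of_span_eq_top
    (F := EuclideanSpace ℂ {α : Fin n → ℕ // ∑ i, α i = m})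
    (span_complexify_image_eq_top (span_range_mLift n m))
  refine ⟨D, hD, fun A L hL => hbound (toEuclideanCLM (𝕜 := ℂ) (L.map _)) _ ?_⟩
  rintro _ ⟨_, ⟨x, rfl⟩, rfl⟩
  rw [hL.nnnorm_toEuclideanCLM_complexify_mLift, nnnorm_complexify_mLift, ← mul_pow]
  exact pow_le_pow_left₀ zero_le (ContinuousLinearMap.le_opNNNorm _ _) m

theorem exists_nnnorm_map_pow_le_mul_nnnorm_map (n : ℕ) {m : ℕ} (hm : m ≠ 0) :
    ∃ C > (0 : ℝ≥0), ∀ (A : Matrix (Fin n) (Fin n) ℝ)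
      (L : Matrix {α : Fin n → ℕ // ∑ i, α i = m} {α : Fin n → ℕ // ∑ i, α i = m} ℝ),
      IsMatrixLift n m A L →
        ‖A.map (algebraMap ℝ ℂ)‖₊ ^ m ≤ C * ‖L.map (algebraMap ℝ ℂ)‖₊ := by
  obtain ⟨C, hC, hbound⟩ := exists_opNNNorm_le_of_span_eq_top (F := EuclideanSpace ℂ (Fin n))
    (span_complexify_image_eq_top (s := Set.univ)
      (Submodule.span_univ (R := ℝ) (M := Fin n → ℝ)))
  refine ⟨C ^ m, by positivity, fun A L hL => ?_⟩
  set r := ‖L.map (algebraMap ℝ ℂ)‖₊ ^ (m⁻¹ : ℝ)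
  have hA : ‖A.map (algebraMap ℝ ℂ)‖₊ ≤ C * r := by
    refine hbound (toEuclideanCLM (𝕜 := ℂ) (A.map _)) _ ?_
    rintro _ ⟨x, -, rfl⟩
    refine (pow_le_pow_iff_left₀ zero_le zero_le hm).1 ?_
    rw [← hL.nnnorm_toEuclideanCLM_complexify_mLift, mul_pow, NNReal.rpow_inv_natCast_pow _ hm,
      ← nnnorm_complexify_mLift]
    exact ContinuousLinearMap.le_opNNNorm _ _
  calc ‖A.map (algebraMap ℝ ℂ)‖₊ ^ m ≤ (C * r) ^ m := pow_le_pow_left₀ zero_le hA m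
    _ = C ^ m * ‖L.map (algebraMap ℝ ℂ)‖₊ := by rw [mul_pow, NNReal.rpow_inv_natCast_pow _ hm]

/-- For every `A ∈ ℝ^{n×n}` and every positive integer `m`, the spectral
radius of the `m`-lift `A^[m]` equals the `m`-th power of the spectral radius of `A`:
`ρ(A^[m]) = ρ(A)^m`. -/
theorem specRad_matrixLift (n m : ℕ) (hm : 0 < m) (A : Matrix (Fin n) (Fin n) ℝ)
    (L : Matrix {α : Fin n → ℕ // ∑ i, α i = m} {α : Fin n → ℕ // ∑ i, α i = m} ℝ)
    (hL : IsMatrixLift n m A L) :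
    specRad L = specRad A ^ m := by
  obtain ⟨C, hC, hAL⟩ := exists_nnnorm_map_pow_le_mul_nnnorm_map n hm.ne'
  obtain ⟨D, hD, hLA⟩ := exists_nnnorm_map_le_mul_nnnorm_map_pow n m
  have hGelfandA := ENNReal.tendsto_pow_rpow_one_div
    (tendsto_nnnorm_pow_map_rpow_one_div_specRad A) m
  have hGelfandL := tendsto_nnnorm_pow_map_rpow_one_div_specRad L
  exact le_antisymm
    (ENNReal.le_of_le_mul_of_tendsto_rpow_one_div hD.ne' (fun k => hLA _ _ (hL.pow k))
      hGelfandL hGelfandA)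
    (ENNReal.le_of_le_mul_of_tendsto_rpow_one_div hC.ne' (fun k => hAL _ _ (hL.pow k))
      hGelfandA hGelfandL)
end

section
/- Let (Ω, ℱ, P) be a probability space, m a positive integer, T > 0, C ≥ 1, and x : [0,∞) × Ω → ℝ^n jointly measurable. Let Z_k : Ω → [0,∞), k ≥ 0, satisfy almost surely: Z₀ = 0, Z_k ≤ Z_{k+1}, Z_{k+1} − Z_k ≤ T, sup_k Z_k = ∞, and ‖x(t)‖ ≤ C‖x(Z_k)‖ whenever Z_k ≤ t ≤ Z_{k+1}. If there exist α, β > 0 such that E[‖x(Z_k)‖^m] ≤ α e^{−βk} for all k ≥ 0, then E[‖x(t)‖^m] ≤ α′ e^{−β′ t} for all t ≥ 0, where α′ = C^m α e^{β}/(1 − e^{−β}) and β′ = β/T. -/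
/-!
Pathwise, `t` lies in some cycle `[Z_k, Z_{k+1}]`, and since the gaps are at most `T` we have
`t ≤ Z_{k+1} ≤ (k+1)T`, i.e. `k ≥ k₀ := ⌈t/T - 1⌉`. Hence `‖x(t)‖^m ≤ C^m ∑_{j ≥ 0} ‖x(Z_{k₀+j})‖^m`,
a bound that no longer depends on the random cycle containing `t`. Taking expectations and summing
the geometric series gives `C^m α e^{-βk₀} / (1 - e^{-β})`, and `k₀ ≥ t/T - 1` turns this into
`α' e^{-βt/T}`.
-/

open scoped BigOperators
open MeasureTheory

noncomputable section

open scoped ENNReal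

lemma measurable_euclNorm {n : ℕ} : Measurable (euclNorm (n := n)) := by
  unfold euclNorm
  fun_prop

lemma exists_mem_Icc_succ_of_unbounded {z : ℕ → ℝ} (hmono : ∀ k, z k ≤ z (k + 1))
    (hunb : ∀ s, ∃ k, s ≤ z k) {t : ℝ} (ht : z 0 ≤ t) :
    ∃ k, t ∈ Set.Icc (z k) (z (k + 1)) := by
  have hex : ∃ k, t ≤ z (k + 1) := by
    obtain ⟨k, hk⟩ := hunb t
    exact ⟨k, hk.trans (hmono k)⟩
  refine ⟨Nat.find hex, ?_, Nat.find_spec hex⟩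
  rcases h : Nat.find hex with _ | k
  · exact ht
  · exact (not_le.mp (Nat.find_min hex (h ▸ k.lt_succ_self))).le

lemma le_mul_of_forall_sub_succ_le {z : ℕ → ℝ} {T : ℝ} (h0 : z 0 = 0)
    (hgap : ∀ k, z (k + 1) - z k ≤ T) : ∀ k : ℕ, z k ≤ k * T
  | 0 => by simp [h0]
  | k + 1 => by
    have := le_mul_of_forall_sub_succ_le h0 hgap k
    have := hgap k
    push_cast
    linarith

lemma exists_ceil_le_and_mem_Icc_succ {z : ℕ → ℝ} {T : ℝ} (hT : 0 < T) (h0 : z 0 = 0)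
    (hmono : ∀ k, z k ≤ z (k + 1)) (hgap : ∀ k, z (k + 1) - z k ≤ T)
    (hunb : ∀ s, ∃ k, s ≤ z k) {t : ℝ} (ht : 0 ≤ t) :
    ∃ k, ⌈t / T - 1⌉₊ ≤ k ∧ t ∈ Set.Icc (z k) (z (k + 1)) := by
  obtain ⟨k, hlo, hhi⟩ := exists_mem_Icc_succ_of_unbounded hmono hunb (h0 ▸ ht)
  have hle : t ≤ (k + 1) * T := by
    exact_mod_cast hhi.trans (le_mul_of_forall_sub_succ_le h0 hgap (k + 1))
  refine ⟨k, Nat.ceil_le.mpr ?_, hlo, hhi⟩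
  rwa [sub_le_iff_le_add, div_le_iff₀ hT]

lemma ofReal_pow_le_ofReal_pow_mul {u v C : ℝ} (hu : 0 ≤ u) (hC : 0 ≤ C) (h : u ≤ C * v)
    (m : ℕ) : ENNReal.ofReal (u ^ m) ≤ ENNReal.ofReal (C ^ m) * ENNReal.ofReal (v ^ m) := by
  rw [← ENNReal.ofReal_mul (pow_nonneg hC m), ← mul_pow]
  exact ENNReal.ofReal_le_ofReal (pow_le_pow_left₀ hu h m)

lemma lintegral_le_mul_tsum_of_ae_le_tail {Ω : Type*} [MeasurableSpace Ω] {P : Measure Ω}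
    {X : Ω → ℝ≥0∞} {Y : ℕ → Ω → ℝ≥0∞} (hY : ∀ k, AEMeasurable (Y k) P) {c : ℝ≥0∞} {k₀ : ℕ}
    (h : ∀ᵐ ω ∂P, ∃ k, k₀ ≤ k ∧ X ω ≤ c * Y k ω) :
    ∫⁻ ω, X ω ∂P ≤ c * ∑' j, ∫⁻ ω, Y (k₀ + j) ω ∂P := by
  have htail : ∀ᵐ ω ∂P, X ω ≤ ∑' j, c * Y (k₀ + j) ω := by
    filter_upwards [h] with ω ⟨k, hk, hX⟩
    calc X ω ≤ c * Y (k₀ + (k - k₀)) ω := by rwa [Nat.add_sub_cancel' hk]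
      _ ≤ ∑' j, c * Y (k₀ + j) ω := ENNReal.le_tsum _
  calc ∫⁻ ω, X ω ∂P ≤ ∫⁻ ω, ∑' j, c * Y (k₀ + j) ω ∂P := lintegral_mono_ae htail
    _ = c * ∑' j, ∫⁻ ω, Y (k₀ + j) ω ∂P := by
      rw [lintegral_tsum fun j => (hY _).const_mul c, ← ENNReal.tsum_mul_left]
      exact tsum_congr fun j => lintegral_const_mul'' c (hY _)

lemma tsum_ofReal_mul_exp_neg_mul_add {a b : ℝ} (ha : 0 ≤ a) (hb : 0 < b) (k₀ : ℕ) :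
    ∑' j : ℕ, ENNReal.ofReal (a * Real.exp (-b * ↑(k₀ + j)))
      = ENNReal.ofReal (a * Real.exp (-b * k₀) / (1 - Real.exp (-b))) := by
  have hr : Real.exp (-b) < 1 := Real.exp_lt_one_iff.mpr (neg_lt_zero.mpr hb)
  have hgeom : ∀ j : ℕ,
      a * Real.exp (-b * ↑(k₀ + j)) = a * Real.exp (-b * k₀) * Real.exp (-b) ^ j := by
    intro j
    rw [← Real.exp_nat_mul, mul_assoc, ← Real.exp_add]
    push_cast
    ring_nf
  simp_rw [hgeom]
  rw [← ENNReal.ofReal_tsum_of_nonneg (fun j => by positivity)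
      ((summable_geometric_of_lt_one (Real.exp_pos _).le hr).mul_left _),
    tsum_mul_left, tsum_geometric_of_lt_one (Real.exp_pos _).le hr, div_eq_mul_inv]

lemma mul_exp_neg_mul_div_le {a b T t : ℝ} {k : ℕ} (ha : 0 ≤ a) (hb : 0 < b)
    (hk : t / T - 1 ≤ k) :
    a * Real.exp (-b * k) / (1 - Real.exp (-b))
      ≤ a * Real.exp b / (1 - Real.exp (-b)) * Real.exp (-(b / T) * t) := by
  have hden : 0 < 1 - Real.exp (-b) :=
    sub_pos.mpr (Real.exp_lt_one_iff.mpr (neg_lt_zero.mpr hb))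
  have hexp : Real.exp (-b * k) ≤ Real.exp b * Real.exp (-(b / T) * t) := by
    rw [← Real.exp_add, Real.exp_le_exp]
    have := mul_le_mul_of_nonneg_left hk hb.le
    have hbt : b / T * t = b * (t / T) := by ring
    linarith
  rw [div_mul_eq_mul_div, mul_assoc]
  gcongr

theorem expDecay_of_sampled_expDecay_general {Ω : Type*} [MeasurableSpace Ω]
    (P : Measure Ω)
    (n m : ℕ) (T C : ℝ) (hT : 0 < T) (hC : 1 ≤ C)
    (x : ℝ → Ω → Fin n → ℝ)
    (hxmeas : Measurable (Function.uncurry x))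
    (Z : ℕ → Ω → ℝ) (hZmeas : ∀ k, Measurable (Z k))
    (hZ : ∀ᵐ ω ∂P,
      Z 0 ω = 0 ∧
      (∀ k, Z k ω ≤ Z (k + 1) ω) ∧
      (∀ k, Z (k + 1) ω - Z k ω ≤ T) ∧
      (∀ t : ℝ, ∃ k, t ≤ Z k ω) ∧
      (∀ k, ∀ t, Z k ω ≤ t → t ≤ Z (k + 1) ω →
        euclNorm (x t ω) ≤ C * euclNorm (x (Z k ω) ω)))
    (a b : ℝ) (ha : 0 < a) (hb : 0 < b)
    (hdecay : ∀ k : ℕ,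
      (∫⁻ ω, ENNReal.ofReal (euclNorm (x (Z k ω) ω) ^ m) ∂P)
        ≤ ENNReal.ofReal (a * Real.exp (-b * k))) :
    ∀ t : ℝ, 0 ≤ t →
      (∫⁻ ω, ENNReal.ofReal (euclNorm (x t ω) ^ m) ∂P)
        ≤ ENNReal.ofReal
            (C ^ m * a * Real.exp b / (1 - Real.exp (-b)) * Real.exp (-(b / T) * t)) := by
  intro t ht
  set k₀ := ⌈t / T - 1⌉₊
  have hC0 : 0 ≤ C := zero_le_one.trans hC
  have hsampled (k : ℕ) : Measurable fun ω => ENNReal.ofReal (euclNorm (x (Z k ω) ω) ^ m) :=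
    ((measurable_euclNorm.comp (hxmeas.comp ((hZmeas k).prodMk measurable_id))).pow_const
      m).ennreal_ofReal
  have hpath : ∀ᵐ ω ∂P, ∃ k, k₀ ≤ k ∧ ENNReal.ofReal (euclNorm (x t ω) ^ m)
      ≤ ENNReal.ofReal (C ^ m) * ENNReal.ofReal (euclNorm (x (Z k ω) ω) ^ m) := by
    filter_upwards [hZ] with ω ⟨h0, hmono, hgap, hunb, hcomp⟩
    obtain ⟨k, hk, hlo, hhi⟩ := exists_ceil_le_and_mem_Icc_succ hT h0 hmono hgap hunb ht
    exact ⟨k, hk, ofReal_pow_le_ofReal_pow_mul (Real.sqrt_nonneg _) hC0 (hcomp k t hlo hhi) m⟩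
  calc (∫⁻ ω, ENNReal.ofReal (euclNorm (x t ω) ^ m) ∂P)
      ≤ ENNReal.ofReal (C ^ m) * ∑' j, ENNReal.ofReal (a * Real.exp (-b * ↑(k₀ + j))) :=
        (lintegral_le_mul_tsum_of_ae_le_tail (fun k => (hsampled k).aemeasurable) hpath).trans
          (by gcongr with j; exact hdecay _)
    _ = ENNReal.ofReal (C ^ m * (a * Real.exp (-b * k₀) / (1 - Real.exp (-b)))) := by
        rw [tsum_ofReal_mul_exp_neg_mul_add ha.le hb, ENNReal.ofReal_mul (pow_nonneg hC0 m)]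
    _ ≤ ENNReal.ofReal
          (C ^ m * (a * Real.exp b / (1 - Real.exp (-b)) * Real.exp (-(b / T) * t))) := by
        gcongr
        exact mul_exp_neg_mul_div_le ha.le hb (Nat.le_ceil _)
    _ = _ := by ring_nf

/-- If a jointly measurable process `x` sampled at renewal times `Z_k`
(with `Z₀ = 0`, gaps at most `T`, `sup_k Z_k = ∞`, and the comparison
`‖x(t)‖ ≤ C‖x(Z_k)‖` on each cycle) satisfies `E[‖x(Z_k)‖^m] ≤ α e^{-βk}`, then
`E[‖x(t)‖^m] ≤ α' e^{-β' t}` for all `t ≥ 0`, where `α' = C^m α e^β/(1 - e^{-β})` and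
`β' = β/T`. -/
theorem expDecay_of_sampled_expDecay {Ω : Type*} [MeasurableSpace Ω]
    (P : Measure Ω) [IsProbabilityMeasure P]
    (n m : ℕ) (hm : 0 < m) (T C : ℝ) (hT : 0 < T) (hC : 1 ≤ C)
    (x : ℝ → Ω → Fin n → ℝ)
    (hxmeas : Measurable (Function.uncurry x))
    (Z : ℕ → Ω → ℝ) (hZmeas : ∀ k, Measurable (Z k))
    (hZ : ∀ᵐ ω ∂P,
      Z 0 ω = 0 ∧
      (∀ k, Z k ω ≤ Z (k + 1) ω) ∧
      (∀ k, Z (k + 1) ω - Z k ω ≤ T) ∧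
      (∀ t : ℝ, ∃ k, t ≤ Z k ω) ∧
      (∀ k, ∀ t, Z k ω ≤ t → t ≤ Z (k + 1) ω →
        euclNorm (x t ω) ≤ C * euclNorm (x (Z k ω) ω)))
    (a b : ℝ) (ha : 0 < a) (hb : 0 < b)
    (hdecay : ∀ k : ℕ,
      (∫⁻ ω, ENNReal.ofReal (euclNorm (x (Z k ω) ω) ^ m) ∂P)
        ≤ ENNReal.ofReal (a * Real.exp (-b * k))) :
    ∀ t : ℝ, 0 ≤ t →
      (∫⁻ ω, ENNReal.ofReal (euclNorm (x t ω) ^ m) ∂P)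
        ≤ ENNReal.ofReal
            (C ^ m * a * Real.exp b / (1 - Real.exp (-b)) * Real.exp (-(b / T) * t)) :=
  expDecay_of_sampled_expDecay_general P n m T C hT hC x hxmeas Z hZmeas hZ a b ha hb hdecay

end
end

section
/- Let F₁, F₂ ∈ ℝ^{d×d} and t ≥ 0. Then the matrix exponential of the block upper-triangular matrix [[F₁, I], [O, F₂]] scaled by t is exp(t·[[F₁, I], [O, F₂]]) = [[e^{tF₁}, ∫_0^t e^{(t−τ)F₁} e^{τF₂} dτ], [O, e^{tF₂}]]; in particular its top-right d×d block equals ∫_0^t e^{(t−τ)F₁} e^{τF₂} dτ. -/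
/-!
Write `t • [[A, B], [0, D]] = t • (X + N)` with `X = [[A, 0], [0, D]]` and `N = [[0, B], [0, 0]]`.
Since `N * exp (s • X) * N = 0`, the Duhamel expansion of `exp (t • (X + N))` around `exp (t • X)`
stops after its first-order term `∫₀ᵗ exp ((t - τ) • X) * N * exp (τ • X) dτ`, whose only nonzero
block is the top-right one, `∫₀ᵗ exp ((t - τ) • A) * B * exp (τ • D) dτ`. The truncated expansion is
obtained by checking that `G s = exp (s • X) * (1 + ∫₀ˢ exp (-τ • X) * N * exp (τ • X) dτ)` solves
`G' = (X + N) * G` with `G 0 = 1`.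
-/

open NormedSpace

namespace NormedSpace

variable {𝔸 : Type*} [NormedRing 𝔸] [NormedAlgebra ℝ 𝔸] [CompleteSpace 𝔸]

theorem exp_add_smul (X : 𝔸) (s u : ℝ) : exp ((s + u) • X) = exp (s • X) * exp (u • X) := by
  let : NormedAlgebra ℚ 𝔸 := .restrictScalars ℚ ℝ 𝔸
  rw [add_smul, exp_add_of_commute (((Commute.refl X).smul_left s).smul_right u)]

theorem eq_exp_smul_mul_of_hasDerivAt {A : 𝔸} {G : ℝ → 𝔸} (hG : ∀ s, HasDerivAt G (A * G s) s)
    (t : ℝ) : G t = exp (t • A) * G 0 := by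
  have hK (s : ℝ) : HasDerivAt (fun s => exp ((t - s) • A) * G s) 0 s := by
    have hexp := (hasDerivAt_exp_smul_const A (t - s)).scomp s ((hasDerivAt_id s).const_sub t)
    refine (hexp.mul (hG s)).congr_deriv ?_
    rw [neg_one_smul, neg_mul, mul_assoc]
    exact neg_add_cancel _
  simpa using is_const_of_deriv_eq_zero (fun s => (hK s).differentiableAt) (fun s => (hK s).deriv) t 0

theorem continuous_exp_smul (X : 𝔸) : Continuous fun s : ℝ => exp (s • X) :=
  (differentiable_exp_smul_const ℝ X).continuous

theorem exp_smul_add_of_mul_exp_smul_mul_eq_zero {X N : 𝔸}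
    (hN : ∀ s : ℝ, N * exp (s • X) * N = 0) (t : ℝ) :
    exp (t • (X + N)) =
      exp (t • X) + ∫ τ in (0 : ℝ)..t, exp ((t - τ) • X) * N * exp (τ • X) := by
  set f : ℝ → 𝔸 := fun τ => exp ((-τ) • X) * N * exp (τ • X) with hf
  set J : ℝ → 𝔸 := fun s => ∫ τ in (0 : ℝ)..s, f τ
  have hfc : Continuous f := by
    have := continuous_exp_smul X
    exact ((this.comp continuous_neg).mul continuous_const).mul this
  have hmul (c : 𝔸) (s : ℝ) : c * J s = ∫ τ in (0 : ℝ)..s, c * f τ :=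
    ((ContinuousLinearMap.mul ℝ 𝔸 c).intervalIntegral_comp_comm
      (hfc.intervalIntegrable 0 s)).symm
  have hshift (s τ : ℝ) : exp (s • X) * f τ = exp ((s - τ) • X) * N * exp (τ • X) := by
    simp only [hf, ← mul_assoc, ← exp_add_smul, sub_eq_add_neg]
  have hG (s : ℝ) : HasDerivAt (fun s => exp (s • X) * (1 + J s))
      ((X + N) * (exp (s • X) * (1 + J s))) s := by
    have hJ : HasDerivAt (fun s => 1 + J s) (f s) s :=
      (hfc.integral_hasStrictDerivAt 0 s).hasDerivAt.const_add 1
    refine ((hasDerivAt_exp_smul_const' X s).mul hJ).congr_deriv ?_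
    have hvanish : N * exp (s • X) * J s = 0 := by
      rw [hmul]
      refine (intervalIntegral.integral_congr fun τ _ => ?_).trans intervalIntegral.integral_zero
      rw [mul_assoc, hshift, ← mul_assoc, ← mul_assoc, hN, zero_mul]
    rw [hshift, sub_self, zero_smul, exp_zero, one_mul]
    simp only [mul_add, add_mul, mul_one, ← mul_assoc, hvanish, add_zero]
    exact add_right_comm _ _ _
  have := eq_exp_smul_mul_of_hasDerivAt hG t
  simp only [J, zero_smul, exp_zero, intervalIntegral.integral_same, add_zero, mul_one] at this
  rw [← this, mul_add, mul_one, hmul]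
  simp only [hshift]

end NormedSpace

namespace Matrix

variable {m n : Type*} [Fintype m] [DecidableEq m] [Fintype n] [DecidableEq n]

theorem exp_fromBlocks_diagonal (A : Matrix m m ℝ) (D : Matrix n n ℝ) :
    exp (fromBlocks A 0 0 D) = fromBlocks (exp A) 0 0 (exp D) := by
  let : NormedRing (Matrix m m ℝ) := Matrix.linftyOpNormedRing
  let : NormedAlgebra ℝ (Matrix m m ℝ) := Matrix.linftyOpNormedAlgebra
  let : NormedRing (Matrix n n ℝ) := Matrix.linftyOpNormedRing
  let : NormedAlgebra ℝ (Matrix n n ℝ) := Matrix.linftyOpNormedAlgebra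
  let : NormedRing (Matrix (m ⊕ n) (m ⊕ n) ℝ) := Matrix.linftyOpNormedRing
  let : NormedAlgebra ℝ (Matrix (m ⊕ n) (m ⊕ n) ℝ) := Matrix.linftyOpNormedAlgebra
  have h := exp_series_hasSum_exp' (𝕂 := ℝ) (fromBlocks A 0 0 D)
  simp only [fromBlocks_diagonal_pow, fromBlocks_smul, smul_zero] at h
  refine h.unique ?_
  have hA := Pi.hasSum.1 (exp_series_hasSum_exp' (𝕂 := ℝ) A)
  have hD := Pi.hasSum.1 (exp_series_hasSum_exp' (𝕂 := ℝ) D)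
  refine Pi.hasSum.2 fun i => Pi.hasSum.2 fun j => ?_
  rcases i with i | i <;> rcases j with j | j
  · exact Pi.hasSum.1 (hA i) j
  · exact hasSum_zero
  · exact hasSum_zero
  · exact Pi.hasSum.1 (hD i) j

theorem exp_smul_fromBlocks_zero₂₁ (A : Matrix m m ℝ) (B : Matrix m n ℝ) (D : Matrix n n ℝ)
    (t : ℝ) :
    exp (t • fromBlocks A B 0 D) =
      fromBlocks (exp (t • A))
        (of fun i j => ∫ τ in (0 : ℝ)..t, (exp ((t - τ) • A) * B * exp (τ • D)) i j)
        0 (exp (t • D)) := by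
  let : NormedRing (Matrix (m ⊕ n) (m ⊕ n) ℝ) := Matrix.linftyOpNormedRing
  let : NormedAlgebra ℝ (Matrix (m ⊕ n) (m ⊕ n) ℝ) := Matrix.linftyOpNormedAlgebra
  set X : Matrix (m ⊕ n) (m ⊕ n) ℝ := fromBlocks A 0 0 D
  set N : Matrix (m ⊕ n) (m ⊕ n) ℝ := fromBlocks 0 B 0 0
  have hexpX (s : ℝ) : exp (s • X) = fromBlocks (exp (s • A)) 0 0 (exp (s • D)) := by
    rw [fromBlocks_smul, smul_zero, smul_zero, exp_fromBlocks_diagonal]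
  have hN (s : ℝ) : N * exp (s • X) * N = 0 := by
    simp [N, hexpX, fromBlocks_multiply]
  have hterm (τ : ℝ) : exp ((t - τ) • X) * N * exp (τ • X) =
      fromBlocks 0 (exp ((t - τ) • A) * B * exp (τ • D)) 0 0 := by
    simp [N, hexpX, fromBlocks_multiply, Matrix.mul_assoc]
  have hcont : Continuous fun τ => exp ((t - τ) • X) * N * exp (τ • X) :=
    (((continuous_exp_smul X).comp (continuous_sub_left t)).mul continuous_const).mul
      (continuous_exp_smul X)
  have hentry (i j : m ⊕ n) : (∫ τ in (0 : ℝ)..t, exp ((t - τ) • X) * N * exp (τ • X)) i j =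
      ∫ τ in (0 : ℝ)..t, (exp ((t - τ) • X) * N * exp (τ • X)) i j :=
    ((LinearMap.toContinuousLinearMap (entryLinearMap ℝ ℝ i j)).intervalIntegral_comp_comm
      (hcont.intervalIntegrable 0 t)).symm
  have hsplit : t • fromBlocks A B 0 D = t • (X + N) := by
    simp [X, N, fromBlocks_add]
  rw [hsplit]
  refine (exp_smul_add_of_mul_exp_smul_mul_eq_zero hN t).trans ?_
  change exp (t • X) + ∫ τ in (0 : ℝ)..t, exp ((t - τ) • X) * N * exp (τ • X) = _
  ext i j
  rw [add_apply, hentry]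
  simp only [hterm]
  rw [hexpX]
  rcases i with i | i <;> rcases j with j | j <;> simp

end Matrix

theorem exp_fromBlocks_general (d : ℕ) (F₁ F₂ : Matrix (Fin d) (Fin d) ℝ) (t : ℝ) :
    NormedSpace.exp (t • Matrix.fromBlocks F₁ 1 0 F₂) =
      Matrix.fromBlocks (NormedSpace.exp (t • F₁))
        (Matrix.of fun i j => ∫ τ in (0 : ℝ)..t,
          (NormedSpace.exp ((t - τ) • F₁) * NormedSpace.exp (τ • F₂)) i j)
        0 (NormedSpace.exp (t • F₂)) ∧
    (NormedSpace.exp (t • Matrix.fromBlocks F₁ 1 0 F₂)).toBlocks₁₂ =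
      Matrix.of fun i j => ∫ τ in (0 : ℝ)..t,
        (NormedSpace.exp ((t - τ) • F₁) * NormedSpace.exp (τ • F₂)) i j := by
  have h := Matrix.exp_smul_fromBlocks_zero₂₁ F₁ 1 F₂ t
  simp only [Matrix.mul_one] at h
  exact ⟨h, by rw [h, Matrix.toBlocks_fromBlocks₁₂]⟩

/-- For `F₁, F₂ ∈ ℝ^{d×d}` and `t ≥ 0`,
`exp (t·[[F₁, I], [O, F₂]]) = [[e^{tF₁}, ∫₀ᵗ e^{(t-τ)F₁} e^{τF₂} dτ], [O, e^{tF₂}]]`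
(the integral taken entrywise); in particular the top-right block is
`∫₀ᵗ e^{(t-τ)F₁} e^{τF₂} dτ`. -/
theorem exp_fromBlocks (d : ℕ) (F₁ F₂ : Matrix (Fin d) (Fin d) ℝ) (t : ℝ) (ht : 0 ≤ t) :
    NormedSpace.exp (t • Matrix.fromBlocks F₁ 1 0 F₂) =
      Matrix.fromBlocks (NormedSpace.exp (t • F₁))
        (Matrix.of fun i j => ∫ τ in (0 : ℝ)..t,
          (NormedSpace.exp ((t - τ) • F₁) * NormedSpace.exp (τ • F₂)) i j)
        0 (NormedSpace.exp (t • F₂)) ∧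
    (NormedSpace.exp (t • Matrix.fromBlocks F₁ 1 0 F₂)).toBlocks₁₂ =
      Matrix.of fun i j => ∫ τ in (0 : ℝ)..t,
        (NormedSpace.exp ((t - τ) • F₁) * NormedSpace.exp (τ • F₂)) i j :=
  exp_fromBlocks_general d F₁ F₂ t
end
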